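/- arXiv:2306.12222 — 5 statements merged into one kernel-verified Lean document; each statement's English description precedes it below -/
import Mathlib

section
/- Let F be a finite simple graph with m edges, and let n, k ≥ 1 be integers. If (G_1, …, G_k) is a rainbow F-free family of simple graphs on the vertex set [n], then there exists a rainbow F-free family (H_1, …, H_k) of simple graphs on [n] such that (a) the union of the edge sets of H_1, …, H_k equals the union of the edge sets of G_1, …, G_k, and (b) H_k ⊆ H_{k−1} ⊆ … ⊆ H_1 (as edge sets). -/
/-!
Let `H_i` consist of the pairs that lie in at least `i` of the graphs `G_1, …, G_k`; these are
nested with union `⋃ G_j`. A rainbow copy of `F` in `(H_i)` whose edges carry the distinct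
colours `c(e)` has each edge `e` in at least `c(e)` of the `G_j`, so among any `s` of its edges
the one of largest colour alone already lies in at least `s` of the `G_j`. This is Hall's
condition, and a system of distinct representatives is a rainbow copy of `F` in `(G_j)`.
-/

open Finset SimpleGraph

/-- A family `G_1, …, G_k` of simple graphs on `[n]` is rainbow `F`-free: there do not exist
an injective map `ψ` from the vertices of `F` to `[n]` and an assignment `c` of pairwise
distinct indices to the edges of `F` such that the `ψ`-image of each edge `e` of `F` is an
edge of `G_{c e}`. -/
def RainbowFree {V : Type*} (F : SimpleGraph V) {n k : ℕ}
    (G : Fin k → SimpleGraph (Fin n)) : Prop :=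
  ¬ ∃ (ψ : V → Fin n) (c : Sym2 V → Fin k),
      Function.Injective ψ ∧ Set.InjOn c F.edgeSet ∧
      ∀ e ∈ F.edgeSet, Sym2.map ψ e ∈ (G (c e)).edgeSet

theorem Finset.card_le_card_biUnion_of_lt_card {κ α : Type*} [DecidableEq α]
    (t : κ → Finset α) {c : κ → ℕ} (hc : Function.Injective c) (ht : ∀ j, c j < #(t j))
    (s : Finset κ) : #s ≤ #(s.biUnion t) := by
  rcases s.eq_empty_or_nonempty with rfl | hs
  · simp
  obtain ⟨j₀, hj₀, hmax⟩ := s.exists_max_image c hs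
  calc #s = #(s.image c) := (card_image_of_injective s hc).symm
    _ ≤ #(range (c j₀ + 1)) :=
        card_le_card fun x hx => by
          obtain ⟨j, hj, rfl⟩ := mem_image.mp hx
          exact mem_range.mpr (Nat.lt_succ_of_le (hmax j hj))
    _ = c j₀ + 1 := card_range _
    _ ≤ #(t j₀) := ht j₀
    _ ≤ #(s.biUnion t) := card_le_card (subset_biUnion_of_mem t hj₀)

theorem Finset.exists_injective_forall_mem_of_lt_card {κ α : Type*} [DecidableEq α]
    (t : κ → Finset α) {c : κ → ℕ} (hc : Function.Injective c) (ht : ∀ j, c j < #(t j)) :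
    ∃ f : κ → α, Function.Injective f ∧ ∀ j, f j ∈ t j :=
  (all_card_le_biUnion_card_iff_exists_injective t).mp
    (card_le_card_biUnion_of_lt_card t hc ht)

namespace SimpleGraph

section Multiplicity

variable {W ι : Type*} [Fintype ι] (G : ι → SimpleGraph W)

open scoped Classical in
noncomputable def edgeMultiplicity (e : Sym2 W) : ℕ :=
  #{i | e ∈ (G i).edgeSet}

-- Indices are 0-based: `levelGraph G i` is the `H_{i+1}` of the proof idea.
noncomputable def levelGraph (r : ℕ) : SimpleGraph W :=
  fromEdgeSet {e | r < edgeMultiplicity G e}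

variable {G}

theorem edgeMultiplicity_pos_iff {e : Sym2 W} :
    0 < edgeMultiplicity G e ↔ ∃ i, e ∈ (G i).edgeSet := by
  classical
  simp [edgeMultiplicity, card_pos, Finset.Nonempty]

theorem mem_edgeSet_levelGraph {r : ℕ} {e : Sym2 W} :
    e ∈ (levelGraph G r).edgeSet ↔ r < edgeMultiplicity G e := by
  refine ⟨fun he => (edgeSet_fromEdgeSet _ ▸ he).1, fun he => ?_⟩
  obtain ⟨i, hi⟩ := edgeMultiplicity_pos_iff.mp (Nat.zero_lt_of_lt he)
  rw [levelGraph, edgeSet_fromEdgeSet]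
  exact ⟨he, (G i).not_isDiag_of_mem_edgeSet hi⟩

theorem levelGraph_antitone : Antitone (levelGraph G) :=
  fun _ _ hrs => fromEdgeSet_mono fun _ he => lt_of_le_of_lt hrs he

theorem edgeSet_levelGraph_zero : (levelGraph G 0).edgeSet = ⋃ i, (G i).edgeSet := by
  ext e
  rw [mem_edgeSet_levelGraph, edgeMultiplicity_pos_iff, Set.mem_iUnion]

end Multiplicity

theorem iUnion_edgeSet_levelGraph {W : Type*} {k : ℕ} (G : Fin k → SimpleGraph W) :
    ⋃ i : Fin k, (levelGraph G i).edgeSet = ⋃ i, (G i).edgeSet := by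
  refine subset_antisymm (Set.iUnion_subset fun i => ?_) fun e he => ?_
  · rw [← edgeSet_levelGraph_zero]
    exact edgeSet_mono (levelGraph_antitone (Nat.zero_le _))
  · obtain ⟨j, -⟩ := Set.mem_iUnion.mp he
    rw [← edgeSet_levelGraph_zero] at he
    exact Set.mem_iUnion.mpr ⟨⟨0, j.pos⟩, he⟩

theorem rainbowFree_levelGraph {V : Type*} {F : SimpleGraph V} {n k : ℕ}
    {G : Fin k → SimpleGraph (Fin n)} (hG : RainbowFree F G) :
    RainbowFree F fun i : Fin k => levelGraph G i := by
  classical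
  rintro ⟨ψ, c, hψ, hc, hmem⟩
  obtain ⟨f, hf, hft⟩ := exists_injective_forall_mem_of_lt_card
    (fun e : F.edgeSet => ({i | Sym2.map ψ e.1 ∈ (G i).edgeSet} : Finset (Fin k)))
    (c := fun e => (c e.1 : ℕ))
    (fun e₁ e₂ h => Subtype.ext (hc e₁.2 e₂.2 (Fin.val_injective h)))
    fun e => mem_edgeSet_levelGraph.mp (hmem e.1 e.2)
  refine hG ⟨ψ, fun e => if h : e ∈ F.edgeSet then f ⟨e, h⟩ else c e, hψ, ?_, ?_⟩
  · intro e₁ h₁ e₂ h₂ h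
    simp only [h₁, h₂, dite_true] at h
    exact congrArg Subtype.val (hf h)
  · intro e he
    simpa [he] using hft ⟨e, he⟩

end SimpleGraph

theorem exists_nested_rainbowFree_general {V : Type*} (F : SimpleGraph V) (n k : ℕ)
    (G : Fin k → SimpleGraph (Fin n)) (hG : RainbowFree F G) :
    ∃ H : Fin k → SimpleGraph (Fin n),
      RainbowFree F H ∧
      (⋃ i, (H i).edgeSet) = (⋃ i, (G i).edgeSet) ∧
      ∀ i j : Fin k, i ≤ j → (H j).edgeSet ⊆ (H i).edgeSet :=
  ⟨fun i => levelGraph G i, rainbowFree_levelGraph hG, iUnion_edgeSet_levelGraph G,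
    fun _ _ hij => edgeSet_mono (levelGraph_antitone (Fin.val_le_of_le hij))⟩

/-- If `(G_1, …, G_k)` is a rainbow `F`-free family of graphs on `[n]`, then there is a
rainbow `F`-free family `(H_1, …, H_k)` on `[n]` with the same union of edge sets and with
nested edge sets `H_k ⊆ H_{k−1} ⊆ … ⊆ H_1`. -/
theorem exists_nested_rainbowFree {V : Type*} [Fintype V] (F : SimpleGraph V) (m : ℕ)
    (hm : F.edgeSet.ncard = m) (n k : ℕ) (hn : 1 ≤ n) (hk : 1 ≤ k)
    (G : Fin k → SimpleGraph (Fin n)) (hG : RainbowFree F G) :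
    ∃ H : Fin k → SimpleGraph (Fin n),
      RainbowFree F H ∧
      (⋃ i, (H i).edgeSet) = (⋃ i, (G i).edgeSet) ∧
      ∀ i j : Fin k, i ≤ j → (H j).edgeSet ⊆ (H i).edgeSet :=
  exists_nested_rainbowFree_general F n k G hG
end

section
/- Let r ≥ 4 and n ≥ r−1 be integers, and let s be an integer with 1 ≤ s ≤ min{r−1, n−1}. Then (r−1)·( t_{r−1}(n) − t_{r−1}(n−s) ) ≥ (r−1)·C(s,2) + (r−2)·s·(n−s). -/
open Finset SimpleGraph

/-- `t_t(n)`: the number of edges of the Turán graph `T_t(n)`. -/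
def turanE (t n : ℕ) : ℕ := (SimpleGraph.turanGraph n t).edgeFinset.card

/-!
Adding the vertex `n` to `T_t(n)` adds its `n - ⌊n/t⌋` neighbours, so
`t·(t_t(k+1) - t_t(k)) = (t-1)·k + (k mod t)`. Summing over `k ∈ [n-s, n)` turns the difference
`t·(t_t(n) - t_t(n-s))` into `(t-1)·∑ k` plus the sum of the residues `k mod t`; as `s ≤ t`
these residues are `s` distinct naturals, so their sum is at least `C(s,2)`, and the bound
follows by collecting terms.
-/

lemma two_mul_turanE (t n : ℕ) :
    2 * turanE t n = ∑ v ∈ range n, ∑ w ∈ range n, if v % t ≠ w % t then 1 else 0 := by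
  rw [turanE, ← sum_degrees_eq_twice_card_edges,
    ← Fin.sum_univ_eq_sum_range (fun v => ∑ w ∈ range n, if v % t ≠ w % t then 1 else 0)]
  refine sum_congr rfl fun v _ => ?_
  rw [← card_neighborFinset_eq_degree, neighborFinset_eq_filter, card_filter,
    ← Fin.sum_univ_eq_sum_range (fun w => if v % t ≠ w % t then 1 else 0)]
  simp only [turanGraph_adj]

lemma card_filter_range_mod_ne (t n : ℕ) (ht : 0 < t) :
    #{w ∈ range n | w % t ≠ n % t} = n - n / t := by
  have hcount := Nat.count_modEq_card n ht n
  simp only [lt_irrefl, if_false, add_zero, Nat.count_eq_card_filter_range] at hcount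
  rw [filter_not, card_sdiff_of_subset (filter_subset _ _), card_range]
  exact congrArg (n - ·) hcount

lemma turanE_succ (t n : ℕ) (ht : 0 < t) : turanE t (n + 1) = turanE t n + (n - n / t) := by
  have hcol : (∑ v ∈ range n, if v % t ≠ n % t then 1 else 0) = n - n / t := by
    rw [sum_boole, card_filter_range_mod_ne t n ht, Nat.cast_id]
  have hrow : (∑ w ∈ range n, if n % t ≠ w % t then 1 else 0) = n - n / t := by
    simpa only [ne_comm] using hcol
  have hD := two_mul_turanE t (n + 1)
  simp only [sum_range_succ, sum_add_distrib, ← two_mul_turanE, hcol, hrow, ne_eq,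
    not_true_eq_false, ↓reduceIte] at hD
  omega

lemma mul_turanE_succ_sub (t n : ℕ) (ht : 0 < t) :
    (t : ℤ) * (turanE t (n + 1) - turanE t n) = (t - 1) * n + (n % t : ℕ) := by
  have hdiv : ((t * (n / t) + n % t : ℕ) : ℤ) = n := by rw [Nat.div_add_mod]
  rw [turanE_succ t n ht, Nat.cast_add, Nat.cast_sub (Nat.div_le_self n t)]
  push_cast at hdiv ⊢
  linear_combination -hdiv

lemma mul_turanE_add_sub (t m s : ℕ) (ht : 0 < t) :
    (t : ℤ) * (turanE t (m + s) - turanE t m) =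
      ∑ i ∈ range s, (((t : ℤ) - 1) * (m + i : ℕ) + ((m + i) % t : ℕ)) := by
  rw [← sum_congr rfl fun i _ => mul_turanE_succ_sub t (m + i) ht, ← mul_sum]
  exact congrArg _ (sum_range_sub (fun i => (turanE t (m + i) : ℤ)) s).symm

lemma Finset.choose_two_card_le_sum (S : Finset ℕ) : (#S).choose 2 ≤ ∑ x ∈ S, x := by
  induction S using Finset.induction_on_max with
  | empty => simp
  | insert a S hlt ih =>
    have hnot : a ∉ S := fun h => lt_irrefl a (hlt a h)
    have hcard : #S ≤ a := by
      simpa using card_le_card (fun x hx => mem_range.2 (hlt x hx) : S ⊆ range a)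
    rw [card_insert_of_notMem hnot, sum_insert hnot, Nat.choose_two_right,
      Nat.triangle_succ, ← Nat.choose_two_right]
    omega

lemma choose_two_le_sum_range_add_mod (t m s : ℕ) (hs : s ≤ t) :
    s.choose 2 ≤ ∑ i ∈ range s, (m + i) % t := by
  have hinj : Set.InjOn (fun i => (m + i) % t) (range s) := by
    intro i hi j hj hij
    have : i ≡ j [MOD t] := Nat.ModEq.add_left_cancel' m hij
    rwa [Nat.ModEq, Nat.mod_eq_of_lt ((mem_range.1 hi).trans_le hs),
      Nat.mod_eq_of_lt ((mem_range.1 hj).trans_le hs)] at this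
  simpa [sum_image fun i hi j hj => hinj hi hj, card_image_of_injOn hinj] using
    ((range s).image fun i => (m + i) % t).choose_two_card_le_sum

lemma le_mul_turanE_add_sub (t m s : ℕ) (ht : 0 < t) (hs : s ≤ t) :
    t * s.choose 2 + (t - 1) * s * m ≤ (t : ℤ) * (turanE t (m + s) - turanE t m) := by
  have hgauss : (∑ i ∈ range s, (i : ℤ)) = s.choose 2 := by
    rw [← Nat.cast_sum, sum_range_id, Nat.choose_two_right]
  have hmod : (s.choose 2 : ℤ) ≤ ∑ i ∈ range s, ((m + i) % t : ℕ) := by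
    exact_mod_cast choose_two_le_sum_range_add_mod t m s hs
  rw [mul_turanE_add_sub t m s ht, sum_add_distrib, ← mul_sum]
  push_cast at hmod ⊢
  rw [sum_add_distrib, hgauss]
  simp only [sum_const, card_range, nsmul_eq_mul]
  linarith

theorem turanE_diff_lower_general (r n s : ℕ) (hr : 4 ≤ r)
    (hs2 : s ≤ min (r - 1) (n - 1)) :
    ((r : ℤ) - 1) * ((turanE (r - 1) n : ℤ) - (turanE (r - 1) (n - s) : ℤ)) ≥
      ((r : ℤ) - 1) * (s.choose 2 : ℤ) + ((r : ℤ) - 2) * (s : ℤ) * ((n : ℤ) - (s : ℤ)) := by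
  obtain ⟨t, rfl⟩ : ∃ t, r = t + 1 := ⟨r - 1, by omega⟩
  obtain ⟨m, rfl⟩ : ∃ m, n = m + s := ⟨n - s, by omega⟩
  have hbound := le_mul_turanE_add_sub t m s (by omega) (by omega)
  simp only [Nat.add_sub_cancel]
  push_cast
  linarith

/-- For `r ≥ 4`, `n ≥ r−1` and `1 ≤ s ≤ min{r−1, n−1}`,
`(r−1)·(t_{r−1}(n) − t_{r−1}(n−s)) ≥ (r−1)·C(s,2) + (r−2)·s·(n−s)`. -/
theorem turanE_diff_lower (r n s : ℕ) (hr : 4 ≤ r) (hn : r - 1 ≤ n)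
    (hs1 : 1 ≤ s) (hs2 : s ≤ min (r - 1) (n - 1)) :
    ((r : ℤ) - 1) * ((turanE (r - 1) n : ℤ) - (turanE (r - 1) (n - s) : ℤ)) ≥
      ((r : ℤ) - 1) * (s.choose 2 : ℤ) + ((r : ℤ) - 2) * (s : ℤ) * ((n : ℤ) - (s : ℤ)) :=
  turanE_diff_lower_general r n s hr hs2
end

section
/- Let r ≥ 4 and n ≥ r−1 be integers, and let s be an integer with 1 ≤ s ≤ n−1. Then t_{r−1}(n−s)·C(n,2) ≥ C(n−s,2)·t_{r−1}(n). -/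
open Finset SimpleGraph

/-!
By Turán's theorem `t_t(n)` is the extremal number `ex(n, K_{t+1})`. Deleting a vertex from an
extremal graph on `n` vertices leaves a `K_{t+1}`-free graph on `n - 1` vertices, and averaging
over the deleted vertex shows that the edge density `ex(n, H) / C(n,2)` is nonincreasing in `n`, for every
forbidden graph `H`.
-/

lemma turanE_eq_extremalNumber {t : ℕ} (ht : 0 < t) (n : ℕ) :
    turanE t n = extremalNumber n (⊤ : SimpleGraph (Fin (t + 1))) := by
  have : Nontrivial (Fin (t + 1)) := Fin.nontrivial_iff_two_le.mpr (by omega)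
  rw [extremalNumber_top, Fintype.card_fin, Nat.add_sub_cancel, turanE]

lemma choose_two_mul_turanE_le_of_le {t m n : ℕ} (ht : 0 < t) (hmn : m ≤ n) :
    m.choose 2 * turanE t n ≤ turanE t m * n.choose 2 := by
  rcases lt_or_ge m 2 with hm | hm
  · simp [Nat.choose_eq_zero_of_lt hm]
  have hdensity := antitoneOn_extremalNumber_div_choose_two (⊤ : SimpleGraph (Fin (t + 1)))
    (Set.mem_Ici.mpr hm) (Set.mem_Ici.mpr (hm.trans hmn)) hmn
  rw [div_le_div_iff₀ (mod_cast Nat.choose_pos (hm.trans hmn)) (mod_cast Nat.choose_pos hm),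
    ← turanE_eq_extremalNumber ht, ← turanE_eq_extremalNumber ht] at hdensity
  rw [mul_comm]
  exact_mod_cast hdensity

theorem turanE_ratio_general (r n s : ℕ) (hr : 4 ≤ r) :
    (n - s).choose 2 * turanE (r - 1) n ≤ turanE (r - 1) (n - s) * n.choose 2 :=
  choose_two_mul_turanE_le_of_le (by omega) (Nat.sub_le n s)

/-- For `r ≥ 4`, `n ≥ r−1` and `1 ≤ s ≤ n−1`,
`t_{r−1}(n−s)·C(n,2) ≥ C(n−s,2)·t_{r−1}(n)`. -/
theorem turanE_ratio (r n s : ℕ) (hr : 4 ≤ r) (hn : r - 1 ≤ n)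
    (hs1 : 1 ≤ s) (hs2 : s ≤ n - 1) :
    (n - s).choose 2 * turanE (r - 1) n ≤ turanE (r - 1) (n - s) * n.choose 2 :=
  turanE_ratio_general r n s hr
end

section
/- Let r ≥ 4 and n ≥ r+1 be integers, and let s be an integer with 1 ≤ s ≤ r−1. Then (r−1)·(C(r,2)−1)·( C(n,2) − C(n−s,2) ) ≥ C(r,2)·( (r−1)·C(s,2) + (r−2)·s·(n−s) ) + (r−1)·(n−s). -/
/-!
With `m = n - s`, Vandermonde gives `C(n,2) - C(m,2) = C(s,2) + s m`, and then twice the difference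
of the two sides is `(r - 1) ((r - 2) s m - s (s - 1) - 2 m)`. This is nonnegative because
`m ≥ r + 1 - s ≥ 2` and `1 ≤ s ≤ r - 1`.
-/

theorem Nat.choose_two_add (a b : ℕ) : (a + b).choose 2 = a.choose 2 + a * b + b.choose 2 := by
  rw [Nat.add_choose_eq, Finset.Nat.sum_antidiagonal_eq_sum_range_succ_mk]
  simp [Finset.sum_range_succ]
  ring

theorem Nat.two_mul_cast_choose_two {R : Type*} [Ring R] (a : ℕ) :
    2 * (a.choose 2 : R) = a * (a - 1) := by
  rw [← Nat.cast_descFactorial_two, Nat.descFactorial_eq_factorial_mul_choose]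
  simp [Nat.factorial_two]

theorem mul_sub_one_add_two_mul_le {r s m : ℤ} (hr : 4 ≤ r) (hs : 1 ≤ s) (hsr : s + 1 ≤ r)
    (hm : 2 ≤ m) : s * (s - 1) + 2 * m ≤ (r - 2) * s * m := by
  nlinarith [mul_nonneg (sub_nonneg.2 hm) (show 0 ≤ s * (r - 2) - 2 by nlinarith),
    mul_nonneg (sub_nonneg.2 hs) (show 0 ≤ r - 1 - s by linarith)]

/-- For `r ≥ 4`, `n ≥ r+1` and `1 ≤ s ≤ r−1`,
`(r−1)·(C(r,2)−1)·(C(n,2) − C(n−s,2)) ≥ C(r,2)·((r−1)·C(s,2) + (r−2)·s·(n−s)) + (r−1)·(n−s)`. -/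
theorem choose_diff_lower (r n s : ℕ) (hr : 4 ≤ r) (hn : r + 1 ≤ n)
    (hs1 : 1 ≤ s) (hs2 : s ≤ r - 1) :
    ((r : ℤ) - 1) * ((r.choose 2 : ℤ) - 1) * ((n.choose 2 : ℤ) - ((n - s).choose 2 : ℤ)) ≥
      (r.choose 2 : ℤ) * (((r : ℤ) - 1) * (s.choose 2 : ℤ)
          + ((r : ℤ) - 2) * (s : ℤ) * ((n : ℤ) - (s : ℤ)))
        + ((r : ℤ) - 1) * ((n : ℤ) - (s : ℤ)) := by
  obtain ⟨m, rfl⟩ : ∃ m, n = s + m := ⟨n - s, by omega⟩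
  have slack : s * (s - 1) + 2 * m ≤ ((r : ℤ) - 2) * s * m :=
    mul_sub_one_add_two_mul_le (by exact_mod_cast hr) (by exact_mod_cast hs1) (by omega)
      (by omega)
  have hR := Nat.two_mul_cast_choose_two (R := ℤ) r
  have hS := Nat.two_mul_cast_choose_two (R := ℤ) s
  rw [Nat.add_sub_cancel_left, Nat.choose_two_add]
  push_cast
  have gap : 2 * ((r - 1) * ((r.choose 2 : ℤ) - 1) * (s.choose 2 + s * m)
      - (r.choose 2 * ((r - 1) * s.choose 2 + (r - 2) * s * m) + (r - 1) * m)) =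
      ((r : ℤ) - 1) * ((r - 2) * s * m - (s * (s - 1) + 2 * m)) := by
    linear_combination (s * m : ℤ) * hR - ((r : ℤ) - 1) * hS
  have hr1 : (0 : ℤ) ≤ r - 1 := by omega
  linarith [mul_nonneg hr1 (sub_nonneg.2 slack)]
end

section
/- Let r ≥ 4 be an integer, let 2 ≤ s ≤ r−1, let δ ∈ {0,1}, and let k ≥ C(r,2) + δ be an integer. Define the sequence (c_1, …, c_s) by: if s = 2, then (c_1, c_2) = (C(r,2)−4, C(r,2)−1); if s ≥ 3, then c_1 = a_{r,s+1} and c_j = a_{r,s} + j − 1 for 2 ≤ j ≤ s. Suppose x_1 ≤ x_2 ≤ … ≤ x_s are integers with 0 ≤ x_i ≤ k for all i, and suppose there exists j ∈ {1, …, s} with x_j ≤ c_j − 1. Then Σ_{i=1}^{s} x_i ≤ (s−1)·k + a_{r,s+1} − δ. -/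
/-- `a_{r,s} = C(r,2) − C(s+1,2) + 2` for `s < r`, with `a_{r,r} = 1`. -/
def aWt (r s : ℕ) : ℕ := if s = r then 1 else r.choose 2 - (s + 1).choose 2 + 2

/-!
If `x_j < c_j`, monotonicity caps `x_1, …, x_j` by `c_j - 1` and the other `s - j` terms are
capped by `k`, so the sum exceeds `(s - 1) k` by at most `j (c_j - 1) - (j - 1) k`.
For `j = 1` this is `a_{r,s+1} - 1`. For `j ≥ 2`, `k ≥ C(r,2) + δ` reduces the claim to
`j (c_j - 1) ≤ (j - 1) C(r,2) + a_{r,s+1}`; for `s ≥ 3` this is the quadratic inequality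
`j² + s ≤ (j - 1) C(s+1,2) + 1` on `2 ≤ j ≤ s`, concave in `j` and true at both ends.
-/

open Finset

theorem sum_Icc_le_mul_add_mul {x : ℕ → ℕ} {j s k : ℕ} (hjs : j ≤ s)
    (hle : ∀ i, 1 ≤ i → i ≤ j → x i ≤ x j) (hk : ∀ i, j < i → i ≤ s → x i ≤ k) :
    ∑ i ∈ Icc 1 s, x i ≤ j * x j + (s - j) * k := by
  rw [← zero_add 1, Icc_add_one_left_eq_Ioc, ← sum_Ioc_consecutive x (Nat.zero_le j) hjs]
  gcongr
  · simpa using sum_le_card_nsmul (Ioc 0 j) x (x j) fun i hi =>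
      hle i (mem_Ioc.1 hi).1 (mem_Ioc.1 hi).2
  · simpa using sum_le_card_nsmul (Ioc j s) x k fun i hi =>
      hk i (mem_Ioc.1 hi).1 (mem_Ioc.1 hi).2

theorem choose_two_succ_succ (n : ℕ) : (n + 1).choose 2 = n.choose 2 + n := by
  simpa [add_comm] using Nat.choose_succ_succ' n 1

theorem sq_add_le_mul_choose_two {j s : ℕ} (hj : 2 ≤ j) (hjs : j ≤ s) (hs : 3 ≤ s) :
    j * j + s ≤ (j - 1) * (s + 1).choose 2 + 1 := by
  have hT := Nat.add_one_mul_choose_eq s 1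
  rw [Nat.choose_one_right] at hT
  zify [(by omega : 1 ≤ j)] at hT hj hjs hs ⊢
  nlinarith [mul_nonneg (sub_nonneg.2 hj) (sub_nonneg.2 hjs),
    mul_nonneg (sub_nonneg.2 hs) (sub_nonneg.2 hjs),
    mul_nonneg (sub_nonneg.2 hj) (sub_nonneg.2 hs),
    mul_nonneg (mul_nonneg (sub_nonneg.2 hj) (sub_nonneg.2 hjs)) (by linarith : (0 : ℤ) ≤ s)]

theorem aWt_of_lt {r s : ℕ} (h : s < r) : aWt r s = r.choose 2 - (s + 1).choose 2 + 2 :=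
  if_neg h.ne

-- Over `ℤ` because at `s + 1 = r` the left side is `2 - r`, while `aWt r r = 1`.
theorem choose_two_sub_le_aWt_succ {r s : ℕ} (h : s < r) :
    (r.choose 2 : ℤ) - (s + 1).choose 2 - (s + 1) + 2 ≤ aWt r (s + 1) := by
  obtain h | rfl := Nat.lt_or_eq_of_le (Nat.succ_le_of_lt h)
  · have hle := Nat.choose_le_choose 2 h
    rw [choose_two_succ_succ (s + 1)] at hle
    rw [aWt_of_lt h, choose_two_succ_succ (s + 1)]
    omega
  · simp [aWt]
    omega

theorem two_mul_le_choose_two_add_aWt {r y : ℕ} (hy : y < r.choose 2 - 1) :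
    2 * y ≤ r.choose 2 + aWt r 3 := by
  unfold aWt
  split_ifs with h
  · subst h
    have : Nat.choose 3 2 = 3 := rfl
    omega
  · have : (3 + 1).choose 2 = 6 := rfl
    omega

theorem mul_le_choose_two_add_aWt {r s j y : ℕ} (hj : 2 ≤ j) (hjs : j ≤ s) (hs : 3 ≤ s)
    (hsr : s < r) (hy : y < aWt r s + j - 1) :
    j * y ≤ (j - 1) * r.choose 2 + aWt r (s + 1) := by
  have hle := Nat.choose_le_choose 2 hsr
  rw [aWt_of_lt hsr] at hy
  have hkey := sq_add_le_mul_choose_two hj hjs hs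
  have hA := choose_two_sub_le_aWt_succ hsr
  have hy' : j * y ≤ j * (r.choose 2 - (s + 1).choose 2 + j) := Nat.mul_le_mul_left j (by omega)
  zify [hle, (by omega : 1 ≤ j)] at hy' hkey ⊢
  linarith

theorem sum_bound_of_missing_general (r s δ k : ℕ) (hsr : s ≤ r - 1)
    (hδ : δ = 0 ∨ δ = 1) (hk : r.choose 2 + δ ≤ k)
    (c x : ℕ → ℕ)
    (hc1 : c 1 = aWt r (s + 1))
    (hc2 : s = 2 → c 2 = r.choose 2 - 1)
    (hc3 : 3 ≤ s → ∀ j : ℕ, 2 ≤ j → j ≤ s → c j = aWt r s + j - 1)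
    (hmono : ∀ i j : ℕ, 1 ≤ i → i ≤ j → j ≤ s → x i ≤ x j)
    (hxk : ∀ i : ℕ, 1 ≤ i → i ≤ s → x i ≤ k)
    (hmiss : ∃ j : ℕ, 1 ≤ j ∧ j ≤ s ∧ x j < c j) :
    ∑ i ∈ Finset.Icc 1 s, x i ≤ (s - 1) * k + aWt r (s + 1) - δ := by
  obtain ⟨j, hj1, hjs, hxj⟩ := hmiss
  have hsum : ∑ i ∈ Icc 1 s, x i ≤ j * x j + (s - j) * k :=
    sum_Icc_le_mul_add_mul hjs (fun i hi hij => hmono i j hi hij hjs)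
      (fun i hji his => hxk i (by omega) his)
  suffices j * x j + (s - j) * k + δ ≤ (s - 1) * k + aWt r (s + 1) by omega
  obtain rfl | hj2 := Nat.eq_or_lt_of_le hj1
  · rw [hc1] at hxj
    omega
  have hprefix : j * x j ≤ (j - 1) * r.choose 2 + aWt r (s + 1) := by
    obtain hs | hs := Nat.lt_or_ge s 3
    · obtain rfl : s = 2 := by omega
      obtain rfl : j = 2 := by omega
      simpa using two_mul_le_choose_two_add_aWt (hc2 rfl ▸ hxj)
    · exact mul_le_choose_two_add_aWt hj2 hjs hs (by omega) (hc3 hs j hj2 hjs ▸ hxj)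
  have hδj : δ ≤ (j - 1) * δ := Nat.le_mul_of_pos_left δ (by omega)
  have hkj : (j - 1) * (r.choose 2 + δ) ≤ (j - 1) * k := Nat.mul_le_mul_left _ hk
  have hsplit : (s - 1) * k = (s - j) * k + (j - 1) * k := by
    rw [← Nat.add_mul]
    congr 1
    omega
  rw [Nat.mul_add] at hkj
  omega

/-- Claim 3.3 core estimate: if `x_1 ≤ … ≤ x_s` are integers with `0 ≤ x_i ≤ k` and some
`x_j ≤ c_j − 1` (where `(c_1,c_2) = (C(r,2)−4, C(r,2)−1)` if `s = 2`, and `c_1 = a_{r,s+1}`,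
`c_j = a_{r,s} + j − 1` for `2 ≤ j ≤ s` if `s ≥ 3`), then
`Σ_i x_i ≤ (s−1)·k + a_{r,s+1} − δ` whenever `δ ∈ {0,1}` and `k ≥ C(r,2) + δ`. -/
theorem sum_bound_of_missing (r s δ k : ℕ) (hr : 4 ≤ r) (hs : 2 ≤ s) (hsr : s ≤ r - 1)
    (hδ : δ = 0 ∨ δ = 1) (hk : r.choose 2 + δ ≤ k)
    (c x : ℕ → ℕ)
    (hc1 : c 1 = aWt r (s + 1))
    (hc2 : s = 2 → c 2 = r.choose 2 - 1)
    (hc3 : 3 ≤ s → ∀ j : ℕ, 2 ≤ j → j ≤ s → c j = aWt r s + j - 1)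
    (hmono : ∀ i j : ℕ, 1 ≤ i → i ≤ j → j ≤ s → x i ≤ x j)
    (hxk : ∀ i : ℕ, 1 ≤ i → i ≤ s → x i ≤ k)
    (hmiss : ∃ j : ℕ, 1 ≤ j ∧ j ≤ s ∧ x j < c j) :
    ∑ i ∈ Finset.Icc 1 s, x i ≤ (s - 1) * k + aWt r (s + 1) - δ :=
  sum_bound_of_missing_general r s δ k hsr hδ hk c x hc1 hc2 hc3 hmono hxk hmiss
end
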